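/- Let Γ1 be an r1-regular signed graph on n1 vertices with adjacency matrix A1 and marking μ1, and Γ2 any signed graph on n2 vertices with adjacency matrix A2 and marking μ2. Then for every real x such that (x−1)·I_{n2} − Q(Γ2) is invertible, det(x·I − Q(Γ1⊛Γ2)) = det((x−1)·I_{n2} − Q(Γ2))^{n1} · det( (x − r1)·(x − r1 − n2 − χ_{Q(Γ2)}(x−1))·I_{n1} − A_{1μ}² ). Equivalently, the signless Laplacian characteristic polynomial of Γ1⊛Γ2 equals ∏_{i=1}^{n2}(x − 1 − ν_{2i})^{n1} · ∏_{i=1}^{n1}( (x − r1 − n2 − χ_{Q(Γ2)}(x−1))(x − r1) − (λ'_{1i})² ), where ν_{2i} are the eigenvalues of Q(Γ2) and λ'_{1i} the eigenvalues of A_{1μ}. -/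

import Mathlib

open Matrix Kronecker BigOperators

/-- The block `μ₂ᵀ ⊗ Φ₁`, where `Φ₁ = diag μ₁` and `μ₂` is regarded as an `n₂×1`
column vector: an `n₁ × (n₂·n₁)` matrix. -/
noncomputable def muBlock {n1 n2 : ℕ} (μ1 : Fin n1 → ℝ) (μ2 : Fin n2 → ℝ) :
    Matrix (Fin n1) (Fin n2 × Fin n1) ℝ :=
  Matrix.of fun i jk => μ2 jk.1 * Matrix.diagonal μ1 i jk.2

/-- Adjacency matrix of the duplication add vertex corona `Γ₁ ⊛ Γ₂`, in `3×3` block form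
`[[0, A₁μ, 0], [A₁μ, 0, μ₂ᵀ⊗Φ₁], [0, μ₂⊗Φ₁, A₂⊗I]]` (blocks of sizes `n₁, n₁, n₁·n₂`),
where `A₁μ = Φ₁·|A₁|·Φ₁` is supplied as a parameter. -/
noncomputable def coronaStar {n1 n2 : ℕ} (A1μ : Matrix (Fin n1) (Fin n1) ℝ)
    (A2 : Matrix (Fin n2) (Fin n2) ℝ) (μ1 : Fin n1 → ℝ) (μ2 : Fin n2 → ℝ) :
    Matrix ((Fin n1 ⊕ Fin n1) ⊕ Fin n2 × Fin n1)
      ((Fin n1 ⊕ Fin n1) ⊕ Fin n2 × Fin n1) ℝ :=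
  Matrix.fromBlocks
    (Matrix.fromBlocks 0 A1μ A1μ 0)
    (Matrix.fromRows (0 : Matrix (Fin n1) (Fin n2 × Fin n1) ℝ) (muBlock μ1 μ2))
    (Matrix.fromCols (0 : Matrix (Fin n2 × Fin n1) (Fin n1) ℝ) (muBlock μ1 μ2)ᵀ)
    (A2 ⊗ₖ (1 : Matrix (Fin n1) (Fin n1) ℝ))

/-- The signed `M`-coronal `χ_M(x) = μᵀ·(x·I − M)⁻¹·μ`. -/
noncomputable def coronal {V : Type} [Fintype V] [DecidableEq V]
    (M : Matrix V V ℝ) (μ : V → ℝ) (x : ℝ) : ℝ :=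
  μ ⬝ᵥ ((x • (1 : Matrix V V ℝ) - M)⁻¹ *ᵥ μ)

/-- The degree matrix of a signed graph: the diagonal matrix of the row sums of the
entrywise absolute value of its adjacency matrix. -/
noncomputable def degMat {V : Type} [Fintype V] [DecidableEq V] (M : Matrix V V ℝ) :
    Matrix V V ℝ :=
  Matrix.diagonal fun i => ∑ j, |M i j|

/-! By regularity, `x·I − Q(Γ₁⊛Γ₂)` has scalar diagonal blocks on the two copies of `V(Γ₁)`, and
its block on `V(Γ₂) × V(Γ₁)` is `((x−1)·I − Q(Γ₂)) ⊗ I`. Its Schur complement against that last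
block only changes the second copy of `V(Γ₁)`, by `(μ₂ᵀ ⊗ Φ₁)(((x−1)·I − Q(Γ₂))⁻¹ ⊗ I)(μ₂ ⊗ Φ₁)`,
which is `χ_{Q(Γ₂)}(x−1)·I` since `Φ₁² = I`. What remains is `[[a·I, −A₁μ], [−A₁μ, d·I]]`, whose
determinant is `det(a d·I − A₁μ²)`. -/

namespace Matrix

section Blocks

variable {k m n R : Type*} [Fintype k] [Fintype m] [Fintype n]
  [DecidableEq k] [DecidableEq m] [DecidableEq n] [CommRing R]

theorem det_fromBlocks_fromRows_zero_fromCols_zero (A : Matrix k k R) (B : Matrix k m R)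
    (C : Matrix m k R) (D : Matrix m m R) (E : Matrix m n R) (F : Matrix n m R)
    (G : Matrix n n R) (hG : IsUnit G.det) :
    (fromBlocks (fromBlocks A B C D) (fromRows 0 E) (fromCols 0 F) G).det =
      G.det * (fromBlocks A B C (D - E * G⁻¹ * F)).det := by
  have := G.invertibleOfIsUnitDet hG
  rw [det_fromBlocks₂₂, invOf_eq_nonsing_inv]
  congr 2
  simp only [fromRows_mul, Matrix.zero_mul]
  ext (i | i) (j | j) <;> simp

theorem det_fromBlocks_smul_one_neg (S : Matrix n n ℝ) (a d : ℝ) :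
    (fromBlocks (a • 1) (-S) (-S) (d • 1)).det = ((a * d) • (1 : Matrix n n ℝ) - S ^ 2).det := by
  have hne : ∀ t : ℝ, t ≠ 0 → (fromBlocks (a • 1) (-S) (-S) (t • 1)).det =
      ((a * t) • (1 : Matrix n n ℝ) - S ^ 2).det := by
    intro t ht
    have hmul : fromBlocks (a • 1) (-S) (-S) (t • 1) * fromBlocks (t • 1) 0 S 1 =
        fromBlocks ((a * t) • (1 : Matrix n n ℝ) - S ^ 2) (-S) 0 (t • 1) := by
      simp [fromBlocks_multiply, sq, smul_smul, sub_eq_add_neg, mul_comm t a]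
    have := congrArg det hmul
    rw [det_mul, det_fromBlocks_zero₁₂, det_fromBlocks_zero₂₁] at this
    simpa [det_smul, ht] using this
  refine congrFun ((Continuous.matrix_det ?_).ext_on (dense_compl_singleton 0)
    (Continuous.matrix_det ?_) hne) d <;> fun_prop

end Blocks

end Matrix

open Matrix

section Corona

variable {n1 n2 : ℕ} (μ1 : Fin n1 → ℝ) (μ2 : Fin n2 → ℝ)

theorem muBlock_mul_kronecker_one_mul_transpose (hμ1 : ∀ i, |μ1 i| = 1)
    (W : Matrix (Fin n2) (Fin n2) ℝ) :
    muBlock μ1 μ2 * (W ⊗ₖ (1 : Matrix (Fin n1) (Fin n1) ℝ)) * (muBlock μ1 μ2)ᵀ =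
      (μ2 ⬝ᵥ (W *ᵥ μ2)) • 1 := by
  ext i i'
  simp only [mul_apply, transpose_apply, muBlock, of_apply, kroneckerMap_apply,
    Fintype.sum_prod_type, diagonal_apply, Matrix.smul_apply, one_apply, smul_eq_mul,
    mul_ite, ite_mul, zero_mul, mul_zero, mul_one, Finset.sum_ite_eq, Finset.sum_ite_eq',
    Finset.mem_univ, if_true]
  rcases eq_or_ne i i' with rfl | h
  · have hsq : μ1 i * μ1 i = 1 := by rw [← abs_mul_abs_self, hμ1 i, one_mul]
    simp only [if_true, dotProduct, mulVec, Finset.mul_sum, Finset.sum_mul]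
    rw [Finset.sum_comm]
    refine Finset.sum_congr rfl fun a _ => Finset.sum_congr rfl fun b _ => ?_
    linear_combination μ2 a * W a b * μ2 b * hsq
  · simp [h]

variable (r : ℝ) (S : Matrix (Fin n1) (Fin n1) ℝ) (A2 : Matrix (Fin n2) (Fin n2) ℝ)

theorem degMat_coronaStar (hμ1 : ∀ i, |μ1 i| = 1) (hμ2 : ∀ j, |μ2 j| = 1)
    (hS : ∀ i, ∑ j, |S i j| = r) :
    degMat (coronaStar S A2 μ1 μ2) =
      fromBlocks (fromBlocks (r • 1) 0 0 ((r + n2) • 1)) 0 0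
        ((degMat A2 + 1) ⊗ₖ (1 : Matrix (Fin n1) (Fin n1) ℝ)) := by
  ext (((i | i) | ⟨p, i⟩)) (((j | j) | ⟨q, j⟩)) <;>
    simp [degMat, coronaStar, muBlock, diagonal_apply, one_apply, Fintype.sum_sum_type,
      Fintype.sum_prod_type, abs_mul, hμ1, hμ2, hS, apply_ite abs]
  split_ifs <;> simp_all [add_comm]

theorem smul_one_sub_degMat_add_coronaStar (x : ℝ) (hμ1 : ∀ i, |μ1 i| = 1)
    (hμ2 : ∀ j, |μ2 j| = 1) (hS : ∀ i, ∑ j, |S i j| = r) :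
    x • 1 - (degMat (coronaStar S A2 μ1 μ2) + coronaStar S A2 μ1 μ2) =
      fromBlocks (fromBlocks ((x - r) • 1) (-S) (-S) ((x - r - n2) • 1))
        (fromRows 0 (-muBlock μ1 μ2)) (fromCols 0 (-(muBlock μ1 μ2)ᵀ))
        (((x - 1) • 1 - (degMat A2 + A2)) ⊗ₖ (1 : Matrix (Fin n1) (Fin n1) ℝ)) := by
  rw [degMat_coronaStar μ1 μ2 r S A2 hμ1 hμ2 hS, coronaStar, ← fromBlocks_one, ← fromBlocks_one]
  simp only [fromBlocks_add, fromBlocks_smul, sub_eq_add_neg, fromBlocks_neg, smul_zero,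
    zero_add, add_zero, neg_zero, fromRows_neg, fromCols_neg]
  congr 1
  · congr 1 <;> module
  · ext ⟨p, i⟩ ⟨q, j⟩
    simp only [kroneckerMap_apply, Matrix.add_apply, Matrix.neg_apply,
      Matrix.smul_apply, one_apply, degMat, diagonal_apply, Prod.mk.injEq]
    split_ifs <;> simp_all
    ring

end Corona

theorem corona_signless_laplacian_charpoly_general (n1 n2 : ℕ) (r1 : ℝ)
    (A1 : Matrix (Fin n1) (Fin n1) ℝ)
    (μ1 : Fin n1 → ℝ) (hμ1 : ∀ i, μ1 i = 1 ∨ μ1 i = -1)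
    (hreg : ∀ i, ∑ j, |A1 i j| = r1)
    (A2 : Matrix (Fin n2) (Fin n2) ℝ)
    (μ2 : Fin n2 → ℝ) (hμ2 : ∀ i, μ2 i = 1 ∨ μ2 i = -1)
    (x : ℝ)
    (hx : IsUnit ((x - 1) • (1 : Matrix (Fin n2) (Fin n2) ℝ) - (degMat A2 + A2)).det) :
    (x • 1 -
        (degMat (coronaStar (Matrix.diagonal μ1 * A1.map abs * Matrix.diagonal μ1) A2 μ1 μ2)
          + coronaStar (Matrix.diagonal μ1 * A1.map abs * Matrix.diagonal μ1) A2 μ1 μ2)).det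
      = ((x - 1) • (1 : Matrix (Fin n2) (Fin n2) ℝ) - (degMat A2 + A2)).det ^ n1 *
        (((x - r1) * (x - r1 - (n2 : ℝ) - coronal (degMat A2 + A2) μ2 (x - 1))) •
            (1 : Matrix (Fin n1) (Fin n1) ℝ)
          - (Matrix.diagonal μ1 * A1.map abs * Matrix.diagonal μ1) ^ 2).det := by
  set S := diagonal μ1 * A1.map abs * diagonal μ1
  set W := (x - 1) • (1 : Matrix (Fin n2) (Fin n2) ℝ) - (degMat A2 + A2)
  have hμ1abs i := (abs_eq zero_le_one).2 (hμ1 i)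
  have hμ2abs j := (abs_eq zero_le_one).2 (hμ2 j)
  have hS : ∀ i, ∑ j, |S i j| = r1 := by simpa [S, abs_mul, hμ1abs] using hreg
  have hWk : IsUnit (W ⊗ₖ (1 : Matrix (Fin n1) (Fin n1) ℝ)).det := by
    simpa [det_kronecker] using hx.pow n1
  have hschur : -muBlock μ1 μ2 * (W ⊗ₖ (1 : Matrix (Fin n1) (Fin n1) ℝ))⁻¹ * -(muBlock μ1 μ2)ᵀ =
      coronal (degMat A2 + A2) μ2 (x - 1) • (1 : Matrix (Fin n1) (Fin n1) ℝ) := by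
    rw [inv_kronecker, inv_one, Matrix.neg_mul, Matrix.neg_mul, Matrix.mul_neg, neg_neg,
      muBlock_mul_kronecker_one_mul_transpose μ1 μ2 hμ1abs]
    rfl
  rw [smul_one_sub_degMat_add_coronaStar μ1 μ2 r1 S A2 x hμ1abs hμ2abs hS,
    det_fromBlocks_fromRows_zero_fromCols_zero _ _ _ _ _ _ _ hWk, hschur, ← sub_smul,
    det_fromBlocks_smul_one_neg, det_kronecker, det_one, one_pow, mul_one, Fintype.card_fin]

/-- For `Γ₁` an `r₁`-regular signed graph on `n₁` vertices and `Γ₂` arbitrary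
on `n₂` vertices, for every real `x` with `(x−1)·I − Q(Γ₂)` invertible,
`det(x·I − Q(Γ₁⊛Γ₂)) = det((x−1)·I − Q(Γ₂))^{n₁} · det((x−r₁)(x−r₁−n₂−χ_{Q(Γ₂)}(x−1))·I_{n₁} − A₁μ²)`. -/
theorem corona_signless_laplacian_charpoly (n1 n2 : ℕ) (r1 : ℝ)
    (A1 : Matrix (Fin n1) (Fin n1) ℝ) (hA1sym : A1.IsSymm) (hA1diag : ∀ i, A1 i i = 0)
    (hA1ent : ∀ i j, A1 i j = 1 ∨ A1 i j = 0 ∨ A1 i j = -1)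
    (μ1 : Fin n1 → ℝ) (hμ1 : ∀ i, μ1 i = 1 ∨ μ1 i = -1)
    (hreg : ∀ i, ∑ j, |A1 i j| = r1)
    (A2 : Matrix (Fin n2) (Fin n2) ℝ) (hA2sym : A2.IsSymm) (hA2diag : ∀ i, A2 i i = 0)
    (hA2ent : ∀ i j, A2 i j = 1 ∨ A2 i j = 0 ∨ A2 i j = -1)
    (μ2 : Fin n2 → ℝ) (hμ2 : ∀ i, μ2 i = 1 ∨ μ2 i = -1)
    (x : ℝ)
    (hx : IsUnit ((x - 1) • (1 : Matrix (Fin n2) (Fin n2) ℝ) - (degMat A2 + A2)).det) :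
    (x • 1 -
        (degMat (coronaStar (Matrix.diagonal μ1 * A1.map abs * Matrix.diagonal μ1) A2 μ1 μ2)
          + coronaStar (Matrix.diagonal μ1 * A1.map abs * Matrix.diagonal μ1) A2 μ1 μ2)).det
      = ((x - 1) • (1 : Matrix (Fin n2) (Fin n2) ℝ) - (degMat A2 + A2)).det ^ n1 *
        (((x - r1) * (x - r1 - (n2 : ℝ) - coronal (degMat A2 + A2) μ2 (x - 1))) •
            (1 : Matrix (Fin n1) (Fin n1) ℝ)
          - (Matrix.diagonal μ1 * A1.map abs * Matrix.diagonal μ1) ^ 2).det :=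
  corona_signless_laplacian_charpoly_general n1 n2 r1 A1 μ1 hμ1 hreg A2 μ2 hμ2 x hx
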